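/- Let a < 0, let N ≥ 2 be a natural number, and let g : ℝ → ℝ be smooth with compact support contained in (a/2, ∞). Define g̃ : ℝ → ℝ by g̃(x) = g(x^{−1/N} + a) for x > 0 and g̃(x) = 0 for x ≤ 0. Then g̃ is smooth with compact support contained in (0, ∞), and for every t > a one has g̃((t − a)^{−N}) = g(t). -/

import Mathlib

open Set

/-- **Change of variables lemma for functions of `(H − a)^{−N}`.**
If `a < 0`, `N ≥ 2`, and `g` is smooth with compact support contained in `(a/2, ∞)`,
then `g̃(x) = g(x^{−1/N} + a)` for `x > 0` (and `g̃ = 0` for `x ≤ 0`) is smooth with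
compact support contained in `(0, ∞)`, and `g̃((t − a)^{−N}) = g(t)` for every `t > a`. -/
theorem tilde_change_of_variables
    (a : ℝ) (ha : a < 0) (N : ℕ) (hN : 2 ≤ N)
    (g : ℝ → ℝ) (hg : ContDiff ℝ (⊤ : ℕ∞) g) (hgsupp : HasCompactSupport g)
    (hgsub : tsupport g ⊆ Set.Ioi (a / 2)) :
    ContDiff ℝ (⊤ : ℕ∞) (fun x : ℝ => if 0 < x then g (x ^ (-(1 : ℝ) / N) + a) else 0) ∧
    HasCompactSupport (fun x : ℝ => if 0 < x then g (x ^ (-(1 : ℝ) / N) + a) else 0) ∧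
    tsupport (fun x : ℝ => if 0 < x then g (x ^ (-(1 : ℝ) / N) + a) else 0) ⊆ Set.Ioi 0 ∧
    ∀ t : ℝ, a < t →
      (if 0 < ((t - a) ^ (-(N : ℤ)) : ℝ) then
        g ((((t - a) ^ (-(N : ℤ)) : ℝ)) ^ (-(1 : ℝ) / N) + a) else 0) = g t := by
  set f : ℝ → ℝ := fun x : ℝ => if 0 < x then g (x ^ (-(1 : ℝ) / N) + a) else 0 with hf
  have hN0 : (N : ℝ) ≠ 0 := by positivity
  -- bounds on the support of g
  obtain ⟨m, M, hm, hmM, hK⟩ : ∃ m M : ℝ, a / 2 < m ∧ m ≤ M ∧ tsupport g ⊆ Icc m M := by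
    rcases (tsupport g).eq_empty_or_nonempty with h | h
    · exact ⟨a / 2 + 1, a / 2 + 1, by linarith, le_refl _, by simp [h]⟩
    · refine ⟨sInf (tsupport g), sSup (tsupport g), hgsub (hgsupp.sInf_mem h), ?_, ?_⟩
      · exact csInf_le_csSup h hgsupp.bddBelow hgsupp.bddAbove
      · exact fun x hx => ⟨csInf_le hgsupp.bddBelow hx, le_csSup hgsupp.bddAbove hx⟩
  have ham : a < m := by linarith
  have haM : a < M := by linarith
  have hma : (0:ℝ) < m - a := by linarith
  have hMa : (0:ℝ) < M - a := by linarith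
  set b : ℝ := (M - a) ^ (-(N : ℝ)) with hbdef
  set B : ℝ := (m - a) ^ (-(N : ℝ)) with hBdef
  have hb : 0 < b := Real.rpow_pos_of_pos hMa _
  have hB : 0 < B := Real.rpow_pos_of_pos hma _
  -- key identity
  have hid : ∀ x : ℝ, 0 < x → (x ^ (-(1 : ℝ) / N)) ^ (-(N : ℝ)) = x := by
    intro x hx
    rw [← Real.rpow_mul hx.le]
    have : -(1 : ℝ) / N * -(N : ℝ) = 1 := by field_simp
    rw [this, Real.rpow_one]
  -- f vanishes below b
  have hzero : ∀ x : ℝ, x < b → f x = 0 := by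
    intro x hx
    by_cases h0 : 0 < x
    · simp only [hf, if_pos h0]
      apply image_eq_zero_of_notMem_tsupport
      intro hmem
      have hle : x ^ (-(1 : ℝ) / N) ≤ M - a := by linarith [(hK hmem).2]
      have hpos : 0 < x ^ (-(1 : ℝ) / N) := Real.rpow_pos_of_pos h0 _
      have : b ≤ x := by
        calc b = (M - a) ^ (-(N : ℝ)) := rfl
          _ ≤ (x ^ (-(1 : ℝ) / N)) ^ (-(N : ℝ)) :=
              Real.rpow_le_rpow_of_nonpos hpos hle (neg_nonpos.mpr (Nat.cast_nonneg N))
          _ = x := hid x h0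
      linarith
    · simp [hf, h0]
  -- support contained in [b, B]
  have hsupp : Function.support f ⊆ Icc b B := by
    intro x hx
    by_cases h0 : 0 < x
    · have hne : g (x ^ (-(1 : ℝ) / N) + a) ≠ 0 := by
        simpa [hf, if_pos h0] using hx
      have hmem : x ^ (-(1 : ℝ) / N) + a ∈ tsupport g :=
        subset_closure hne
      obtain ⟨h1, h2⟩ := hK hmem
      have hpos : 0 < x ^ (-(1 : ℝ) / N) := Real.rpow_pos_of_pos h0 _
      constructor
      · calc b = (M - a) ^ (-(N : ℝ)) := rfl
          _ ≤ (x ^ (-(1 : ℝ) / N)) ^ (-(N : ℝ)) :=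
              Real.rpow_le_rpow_of_nonpos hpos (by linarith) (neg_nonpos.mpr (Nat.cast_nonneg N))
          _ = x := hid x h0
      · calc x = (x ^ (-(1 : ℝ) / N)) ^ (-(N : ℝ)) := (hid x h0).symm
          _ ≤ (m - a) ^ (-(N : ℝ)) :=
              Real.rpow_le_rpow_of_nonpos hma (by linarith) (neg_nonpos.mpr (Nat.cast_nonneg N))
          _ = B := rfl
    · exact absurd (by simp [hf, h0]) hx
  have htsupp : tsupport f ⊆ Icc b B := closure_minimal hsupp isClosed_Icc
  refine ⟨?_, ?_, ?_, ?_⟩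
  · -- smoothness
    rw [contDiff_iff_contDiffAt]
    intro x
    by_cases h0 : 0 < x
    · have h1 : ContDiffAt ℝ (⊤ : ℕ∞) (fun y : ℝ => g (y ^ (-(1 : ℝ) / N) + a)) x :=
        hg.contDiffAt.comp x
          ((Real.contDiffAt_rpow_const_of_ne (ne_of_gt h0)).add contDiffAt_const)
      refine h1.congr_of_eventuallyEq ?_
      filter_upwards [isOpen_Ioi.mem_nhds h0] with y hy
      simp [hf, if_pos (mem_Ioi.mp hy)]
    · refine (contDiffAt_const (c := (0:ℝ))).congr_of_eventuallyEq ?_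
      have hxb : x < b := lt_of_le_of_lt (not_lt.mp h0) hb
      filter_upwards [isOpen_Iio.mem_nhds hxb] with y hy
      exact hzero y hy
  · exact isCompact_Icc.of_isClosed_subset (isClosed_tsupport f) htsupp
  · exact fun x hx => lt_of_lt_of_le hb (htsupp hx).1
  · intro t ht
    have hta : (0:ℝ) < t - a := by linarith
    have hu : (0:ℝ) < (t - a) ^ (-(N : ℤ)) := zpow_pos hta _
    rw [if_pos hu]
    have h1 : ((t - a) ^ (-(N : ℤ)) : ℝ) = (t - a) ^ (-(N : ℝ)) := by
      rw [← Real.rpow_intCast (t - a) (-(N : ℤ))]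
      push_cast
      ring_nf
    rw [h1, ← Real.rpow_mul hta.le]
    have : -(N : ℝ) * (-(1 : ℝ) / N) = 1 := by field_simp
    rw [this, Real.rpow_one]
    ring_nf
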